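/- A properly 2-colored digraph (G,σ) is a best match graph if and only if it is sink-free and does not contain an induced F1-, F2-, or F3-graph. -/

import Mathlib

/-- A rooted (phylogenetic) tree on leaf set `V`, encoded by its hierarchy of
clusters `L(T(v))`, `v ∈ V(T)`: a rooted tree on leaf set `V` corresponds
exactly to a family of nonempty, pairwise compatible subsets of `V` containing
all singletons and `V` itself.  Together with a coloring `σ : V → M` this is a
leaf-colored tree. -/
structure PhyloTree (V : Type) where
  clusters : Set (Set V)
  compat : ∀ p ∈ clusters, ∀ q ∈ clusters, p ⊆ q ∨ q ⊆ p ∨ p ∩ q = ∅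
  singleton_mem : ∀ v : V, {v} ∈ clusters
  univ_mem : Set.univ ∈ clusters
  nonempty_mem : ∀ p ∈ clusters, p.Nonempty

namespace PhyloTree

variable {V M : Type}

/-- The cluster `L(T(lca(x,y)))` of the last common ancestor of `x` and `y`;
for inner vertices `u,v` of a tree one has `u ⪯_T v ↔ L(T(u)) ⊆ L(T(v))`. -/
def lcaSet (T : PhyloTree V) (x y : V) : Set V :=
  ⋂₀ {p : Set V | p ∈ T.clusters ∧ x ∈ p ∧ y ∈ p}

/-- `T` displays the triple `xy|z`, i.e. `lca(x,y) ≺ lca(x,z) = lca(y,z)`. -/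
def Displays (T : PhyloTree V) (x y z : V) : Prop :=
  T.lcaSet x y ⊂ T.lcaSet x z ∧ T.lcaSet x z = T.lcaSet y z

/-- `y` is a best match of `x` in the leaf-colored tree `(T,σ)`. -/
def BestMatch (T : PhyloTree V) (σ : V → M) (x y : V) : Prop :=
  σ x ≠ σ y ∧ ∀ y' : V, σ y' = σ y → T.lcaSet x y ⊆ T.lcaSet x y'

end PhyloTree

variable {V M : Type}

/-- `(T,σ)` explains `(G,σ)`, i.e. `(G,σ) = G(T,σ)`. -/
def Explains (T : PhyloTree V) (σ : V → M) (G : V → V → Prop) : Prop :=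
  ∀ x y : V, G x y ↔ T.BestMatch σ x y

/-- `(G,σ)` is a best match graph. -/
def IsBMG (G : V → V → Prop) (σ : V → M) : Prop :=
  ∃ T : PhyloTree V, Explains T σ G

/-- The triple `xy|y'` is informative for `(G,σ)`. -/
def InformativeTriple (G : V → V → Prop) (σ : V → M) (x y y' : V) : Prop :=
  x ≠ y ∧ x ≠ y' ∧ y ≠ y' ∧ σ x ≠ σ y ∧ σ y = σ y' ∧ G x y ∧ ¬ G x y'

/-- The triple `xy|y'` is forbidden for `(G,σ)`. -/
def ForbiddenTriple (G : V → V → Prop) (σ : V → M) (x y y' : V) : Prop :=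
  x ≠ y ∧ x ≠ y' ∧ y ≠ y' ∧ σ x ≠ σ y ∧ σ y = σ y' ∧ G x y ∧ G x y'

/-- `(G,σ)` is sf-colored: `σ` is proper and every vertex has an out-neighbor
of every color present in the graph other than its own. -/
def SfColored (G : V → V → Prop) (σ : V → M) : Prop :=
  (∀ x y : V, G x y → σ x ≠ σ y) ∧
  ∀ (x : V) (s : M), (∃ v : V, σ v = s) → s ≠ σ x → ∃ y : V, σ y = s ∧ G x y

/-- `(G,σ)` contains an induced F1-graph. -/
def HasF1 (G : V → V → Prop) (σ : V → M) : Prop :=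
  ∃ x1 x2 y1 y2 : V,
    x1 ≠ x2 ∧ y1 ≠ y2 ∧
    σ x1 = σ x2 ∧ σ y1 = σ y2 ∧ σ x1 ≠ σ y1 ∧
    ¬ G x1 x2 ∧ ¬ G x2 x1 ∧ ¬ G y1 y2 ∧ ¬ G y2 y1 ∧
    G x1 y1 ∧ G y2 x2 ∧ G y1 x2 ∧ ¬ G x1 y2 ∧ ¬ G y2 x1

/-- `(G,σ)` contains an induced F2-graph. -/
def HasF2 (G : V → V → Prop) (σ : V → M) : Prop :=
  ∃ x1 x2 y1 y2 : V,
    x1 ≠ x2 ∧ y1 ≠ y2 ∧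
    σ x1 = σ x2 ∧ σ y1 = σ y2 ∧ σ x1 ≠ σ y1 ∧
    ¬ G x1 x2 ∧ ¬ G x2 x1 ∧ ¬ G y1 y2 ∧ ¬ G y2 y1 ∧
    G x1 y1 ∧ G y1 x2 ∧ G x2 y2 ∧ ¬ G x1 y2

/-- `(G,σ)` contains an induced F3-graph. -/
def HasF3 (G : V → V → Prop) (σ : V → M) : Prop :=
  ∃ x1 x2 y1 y2 y3 : V,
    x1 ≠ x2 ∧ y1 ≠ y2 ∧ y1 ≠ y3 ∧ y2 ≠ y3 ∧
    σ x1 = σ x2 ∧ σ y1 = σ y2 ∧ σ y2 = σ y3 ∧ σ x1 ≠ σ y1 ∧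
    ¬ G x1 x2 ∧ ¬ G x2 x1 ∧ ¬ G y1 y2 ∧ ¬ G y2 y1 ∧
    ¬ G y1 y3 ∧ ¬ G y3 y1 ∧ ¬ G y2 y3 ∧ ¬ G y3 y2 ∧
    G x1 y1 ∧ G x2 y2 ∧ G x1 y3 ∧ G x2 y3 ∧ ¬ G x1 y2 ∧ ¬ G x2 y1

/-!
In a leaf-coloured tree, if `y` is a best match of `x`, then the best matches of `x` of colour
`σ y` are exactly the vertices of that colour in the cluster `lca(x, y)`.  These clusters are
nested or disjoint, and an induced F1-, F2- or F3-graph would force two of them to overlap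
without nesting, or a vertex of the right colour into `lca(x, y)` without being a best match.

Conversely, for a properly 2-coloured digraph the absence of F1, F2 and F3 amounts to three
closure rules for the arc relation (`TwoBMGConditions`).  Order the vertices lexicographically
by out-neighbourhood (inclusion) and then in-neighbourhood (reverse inclusion), and attach to `x`
the cluster `N(x) ∪ {u | u is below x}`.  The rules make these clusters a hierarchy, and the
smallest of them containing `x` and a vertex of the other colour is the cluster of `x`, whose
vertices of the other colour are exactly `N(x)`; so the tree built from them explains `G`.
-/

namespace PhyloTree

variable (T : PhyloTree V)

theorem mem_lcaSet_left (x y : V) : x ∈ T.lcaSet x y :=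
  Set.mem_sInter.2 fun _ hp => hp.2.1

theorem mem_lcaSet_right (x y : V) : y ∈ T.lcaSet x y :=
  Set.mem_sInter.2 fun _ hp => hp.2.2

theorem lcaSet_subset {p : Set V} {x y : V} (hp : p ∈ T.clusters) (hx : x ∈ p) (hy : y ∈ p) :
    T.lcaSet x y ⊆ p :=
  Set.sInter_subset_of_mem ⟨hp, hx, hy⟩

theorem subset_or_subset_of_mem {p q : Set V} {w : V} (hp : p ∈ T.clusters)
    (hq : q ∈ T.clusters) (hwp : w ∈ p) (hwq : w ∈ q) : p ⊆ q ∨ q ⊆ p := by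
  rcases T.compat p hp q hq with h | h | h
  · exact Or.inl h
  · exact Or.inr h
  · exact absurd (h ▸ ⟨hwp, hwq⟩ : w ∈ (∅ : Set V)) (Set.notMem_empty w)

theorem lcaSet_mem_clusters [Finite V] (x y : V) : T.lcaSet x y ∈ T.clusters := by
  obtain ⟨m, hm, hmin⟩ := (Set.toFinite {p | p ∈ T.clusters ∧ x ∈ p ∧ y ∈ p}).exists_minimal
    ⟨_, T.univ_mem, trivial, trivial⟩
  have hlca : T.lcaSet x y = m := (Set.sInter_subset_of_mem hm).antisymm <|
    Set.subset_sInter fun p hp => (T.subset_or_subset_of_mem hm.1 hp.1 hm.2.1 hp.2.1).elim id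
      fun hpm => hmin hp hpm
  exact hlca ▸ hm.1

theorem lcaSet_subset_or_subset [Finite V] (x y z : V) :
    T.lcaSet x y ⊆ T.lcaSet x z ∨ T.lcaSet x z ⊆ T.lcaSet x y :=
  T.subset_or_subset_of_mem (T.lcaSet_mem_clusters x y) (T.lcaSet_mem_clusters x z)
    (T.mem_lcaSet_left x y) (T.mem_lcaSet_left x z)

theorem exists_bestMatch [Finite V] (σ : V → M) {x y : V} (hxy : σ x ≠ σ y) :
    ∃ z, σ z = σ y ∧ T.BestMatch σ x z := by
  obtain ⟨z, hz, hmin⟩ := (Set.toFinite {z | σ z = σ y}).exists_minimalFor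
    (T.lcaSet x) _ ⟨y, rfl⟩
  refine ⟨z, hz, hz ▸ hxy, fun y' hy' => ?_⟩
  exact (T.lcaSet_subset_or_subset x z y').elim id fun h => hmin (hy'.trans hz) h

def ofLaminar [Nonempty V] (F : Set (Set V))
    (hF : ∀ p ∈ F, ∀ q ∈ F, p ⊆ q ∨ q ⊆ p ∨ p ∩ q = ∅) (hne : ∀ p ∈ F, p.Nonempty) :
    PhyloTree V where
  clusters := {p | p = Set.univ ∨ (∃ v, p = {v}) ∨ p ∈ F}
  compat := by
    have singleton_compat (v : V) (q : Set V) : {v} ⊆ q ∨ {v} ∩ q = ∅ :=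
      (em (v ∈ q)).imp Set.singleton_subset_iff.2 Set.singleton_inter_eq_empty.2
    rintro p (rfl | ⟨v, rfl⟩ | hp) q (rfl | ⟨w, rfl⟩ | hq)
    all_goals first
      | exact Or.inr (Or.inl (Set.subset_univ _))
      | exact Or.inl (Set.subset_univ _)
      | exact (singleton_compat _ _).imp_right Or.inr
      | exact hF p hp q hq
      | skip
    rcases singleton_compat w p with h | h
    · exact Or.inr (Or.inl h)
    · exact Or.inr (Or.inr (Set.inter_comm _ _ ▸ h))
  singleton_mem v := Or.inr (Or.inl ⟨v, rfl⟩)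
  univ_mem := Or.inl rfl
  nonempty_mem := by
    rintro p (rfl | ⟨v, rfl⟩ | hp)
    · exact Set.univ_nonempty
    · exact Set.singleton_nonempty v
    · exact hne p hp

theorem subset_lcaSet_ofLaminar [Nonempty V] {F : Set (Set V)}
    {hF : ∀ p ∈ F, ∀ q ∈ F, p ⊆ q ∨ q ⊆ p ∨ p ∩ q = ∅} {hne : ∀ p ∈ F, p.Nonempty}
    {s : Set V} {x y : V} (hxy : x ≠ y) (hs : ∀ p ∈ F, x ∈ p → y ∈ p → s ⊆ p) :
    s ⊆ (ofLaminar F hF hne).lcaSet x y := by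
  refine Set.subset_sInter ?_
  rintro p ⟨rfl | ⟨v, rfl⟩ | hp, hx, hy⟩
  · exact Set.subset_univ s
  · exact absurd (hx.trans hy.symm) hxy
  · exact hs p hp hx hy

end PhyloTree

namespace Explains

variable {T : PhyloTree V} {σ : V → M} {G : V → V → Prop}

theorem lcaSet_subset_of_adj (hT : Explains T σ G) {x y y' : V} (hxy : G x y)
    (hy' : σ y' = σ y) : T.lcaSet x y ⊆ T.lcaSet x y' :=
  ((hT x y).1 hxy).2 y' hy'

theorem exists_adj [Finite V] (hT : Explains T σ G) {x y : V} (hxy : σ x ≠ σ y) :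
    ∃ z, σ z = σ y ∧ G x z :=
  (T.exists_bestMatch σ hxy).imp fun z hz => ⟨hz.1, (hT x z).2 hz.2⟩

theorem adj_iff_mem_lcaSet [Finite V] (hT : Explains T σ G) {x y z : V} (hxy : G x y)
    (hz : σ z = σ y) : G x z ↔ z ∈ T.lcaSet x y := by
  refine ⟨fun hxz => hT.lcaSet_subset_of_adj hxz hz.symm (T.mem_lcaSet_right x z),
    fun hzL => (hT x z).2 ⟨hz ▸ ((hT x y).1 hxy).1, fun y' hy' => ?_⟩⟩
  exact (T.lcaSet_subset (T.lcaSet_mem_clusters x y) (T.mem_lcaSet_left x y) hzL).trans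
    (hT.lcaSet_subset_of_adj hxy (hy'.trans hz))

theorem mem_lcaSet_of_adj [Finite V] (hT : Explains T σ G) {x y u v w : V}
    (hu : u ∈ T.lcaSet x y) (hw : w ∈ T.lcaSet x y) (huv : G u v) (hvw : σ v = σ w) :
    v ∈ T.lcaSet x y :=
  T.lcaSet_subset (T.lcaSet_mem_clusters x y) hu hw <|
    hT.lcaSet_subset_of_adj huv hvw.symm (T.mem_lcaSet_right u v)

theorem not_hasF1 [Finite V] (hT : Explains T σ G) : ¬ HasF1 G σ := by
  rintro ⟨x1, x2, y1, y2, -, -, hx, hy, -, -, -, -, -, h11, h22, h12, hn12, hn21⟩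
  have hx2 : x2 ∈ T.lcaSet x1 y1 :=
    hT.mem_lcaSet_of_adj (T.mem_lcaSet_right x1 y1) (T.mem_lcaSet_left x1 y1) h12 hx.symm
  rcases T.subset_or_subset_of_mem (T.lcaSet_mem_clusters x1 y1) (T.lcaSet_mem_clusters y2 x2)
    hx2 (T.mem_lcaSet_right y2 x2) with h | h
  · exact hn21 ((hT.adj_iff_mem_lcaSet h22 hx).2 (h (T.mem_lcaSet_left x1 y1)))
  · exact hn12 ((hT.adj_iff_mem_lcaSet h11 hy.symm).2 (h (T.mem_lcaSet_left y2 x2)))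

theorem not_hasF2 [Finite V] (hT : Explains T σ G) : ¬ HasF2 G σ := by
  rintro ⟨x1, x2, y1, y2, -, -, hx, hy, -, -, -, -, -, h11, h12, h22, hn12⟩
  have hx2 : x2 ∈ T.lcaSet x1 y1 :=
    hT.mem_lcaSet_of_adj (T.mem_lcaSet_right x1 y1) (T.mem_lcaSet_left x1 y1) h12 hx.symm
  have hy2 : y2 ∈ T.lcaSet x1 y1 :=
    hT.mem_lcaSet_of_adj hx2 (T.mem_lcaSet_right x1 y1) h22 hy.symm
  exact hn12 ((hT.adj_iff_mem_lcaSet h11 hy.symm).2 hy2)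

theorem not_hasF3 [Finite V] (hT : Explains T σ G) : ¬ HasF3 G σ := by
  rintro ⟨x1, x2, y1, y2, y3, -, -, -, -, -, hy12, hy23, -, -, -, -, -, -, -, -, -,
    h11, h22, h13, h23, hn12, hn21⟩
  rcases T.subset_or_subset_of_mem (T.lcaSet_mem_clusters x1 y3) (T.lcaSet_mem_clusters x2 y3)
    (T.mem_lcaSet_right x1 y3) (T.mem_lcaSet_right x2 y3) with h | h
  · exact hn21 ((hT.adj_iff_mem_lcaSet h23 (hy12.trans hy23)).2
      (h ((hT.adj_iff_mem_lcaSet h13 (hy12.trans hy23)).1 h11)))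
  · exact hn12 ((hT.adj_iff_mem_lcaSet h13 hy23).2 (h ((hT.adj_iff_mem_lcaSet h23 hy23).1 h22)))

end Explains

section NeighbourhoodClusters

variable (G : V → V → Prop)

def outNbrs (x : V) : Set V := {y | G x y}

def inNbrs (x : V) : Set V := {z | G z x}

def NbrBelow (u x : V) : Prop :=
  outNbrs G u ⊂ outNbrs G x ∨ (outNbrs G u = outNbrs G x ∧ inNbrs G x ⊆ inNbrs G u)

def nbrCluster (x : V) : Set V := outNbrs G x ∪ {u | NbrBelow G u x}

variable {G}

theorem NbrBelow.outNbrs_subset {u x : V} (h : NbrBelow G u x) : outNbrs G u ⊆ outNbrs G x :=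
  h.elim LT.lt.subset fun h => h.1.subset

theorem NbrBelow.trans {u x z : V} (hux : NbrBelow G u x) (hxz : NbrBelow G x z) :
    NbrBelow G u z := by
  rcases hxz with hxz | ⟨hxz, hin⟩
  · exact Or.inl (hux.outNbrs_subset.trans_ssubset hxz)
  · rcases hux with hux | ⟨hux, hin'⟩
    · exact Or.inl (hxz ▸ hux)
    · exact Or.inr ⟨hux.trans hxz, hin.trans hin'⟩

theorem nbrBelow_of_subset {u x : V} (hout : outNbrs G u ⊆ outNbrs G x)
    (hin : inNbrs G x ⊆ inNbrs G u) : NbrBelow G u x := by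
  by_cases hxu : outNbrs G x ⊆ outNbrs G u
  · exact Or.inr ⟨hout.antisymm hxu, hin⟩
  · exact Or.inl (ssubset_of_subset_not_subset hout hxu)

theorem self_mem_nbrCluster (x : V) : x ∈ nbrCluster G x :=
  Or.inr (Or.inr ⟨rfl, subset_rfl⟩)

end NeighbourhoodClusters

theorem Bool.eq_of_ne_of_ne {a b c : Bool} (ha : a ≠ c) (hb : b ≠ c) : a = b :=
  (Bool.eq_not_iff.2 ha).trans (Bool.eq_not_iff.2 hb).symm

structure TwoBMGConditions (G : V → V → Prop) (σ : V → Bool) : Prop where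
  proper : ∀ x y, G x y → σ x ≠ σ y
  sinkFree : ∀ x, ∃ y, G x y
  adj_or_adj : ∀ x1 y1 x2 y2, G x1 y1 → G y1 x2 → G y2 x2 → G x1 y2 ∨ G y2 x1
  adj_of_path : ∀ a b c d, G a b → G b c → G c d → G a d
  adj_or_adj_of_common : ∀ x1 x2 y1 y2 y3,
    G x1 y1 → G x2 y2 → G x1 y3 → G x2 y3 → G x1 y2 ∨ G x2 y1

namespace TwoBMGConditions

variable {G : V → V → Prop} {σ : V → Bool}

theorem of_not_hasF (hproper : ∀ x y, G x y → σ x ≠ σ y) (hsf : ∀ x, ∃ y, G x y)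
    (hF1 : ¬ HasF1 G σ) (hF2 : ¬ HasF2 G σ) (hF3 : ¬ HasF3 G σ) : TwoBMGConditions G σ where
  proper := hproper
  sinkFree := hsf
  adj_or_adj x1 y1 x2 y2 h11 h12 h22 := by
    by_contra! hn
    have hx : σ x1 = σ x2 := Bool.eq_of_ne_of_ne (hproper _ _ h11) (hproper _ _ h12).symm
    have hy : σ y1 = σ y2 := Bool.eq_of_ne_of_ne (hproper _ _ h12) (hproper _ _ h22)
    refine hF1 ⟨x1, x2, y1, y2, ?_, ?_, hx, hy, hproper _ _ h11, fun h => hproper _ _ h hx,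
      fun h => hproper _ _ h hx.symm, fun h => hproper _ _ h hy, fun h => hproper _ _ h hy.symm,
      h11, h22, h12, hn⟩
    · rintro rfl; exact hn.2 h22
    · rintro rfl; exact hn.1 h11
  adj_of_path a b c d hab hbc hcd := by
    by_contra hn
    have hac : σ a = σ c := Bool.eq_of_ne_of_ne (hproper _ _ hab) (hproper _ _ hbc).symm
    have hbd : σ b = σ d := Bool.eq_of_ne_of_ne (hproper _ _ hbc) (hproper _ _ hcd).symm
    refine hF2 ⟨a, c, b, d, ?_, ?_, hac, hbd, hproper _ _ hab, fun h => hproper _ _ h hac,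
      fun h => hproper _ _ h hac.symm, fun h => hproper _ _ h hbd,
      fun h => hproper _ _ h hbd.symm, hab, hbc, hcd, hn⟩
    · rintro rfl; exact hn hcd
    · rintro rfl; exact hn hab
  adj_or_adj_of_common x1 x2 y1 y2 y3 h11 h22 h13 h23 := by
    by_contra! hn
    have hx : σ x1 = σ x2 := Bool.eq_of_ne_of_ne (hproper _ _ h13) (hproper _ _ h23)
    have hy23 : σ y2 = σ y3 :=
      Bool.eq_of_ne_of_ne (hproper _ _ h22).symm (hproper _ _ h23).symm
    have hy13 : σ y1 = σ y3 :=
      Bool.eq_of_ne_of_ne (hproper _ _ h11).symm (hproper _ _ h13).symm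
    have hy12 : σ y1 = σ y2 := hy13.trans hy23.symm
    refine hF3 ⟨x1, x2, y1, y2, y3, ?_, ?_, ?_, ?_, hx, hy12, hy23, hproper _ _ h11,
      fun h => hproper _ _ h hx, fun h => hproper _ _ h hx.symm,
      fun h => hproper _ _ h hy12, fun h => hproper _ _ h hy12.symm,
      fun h => hproper _ _ h hy13, fun h => hproper _ _ h hy13.symm,
      fun h => hproper _ _ h hy23, fun h => hproper _ _ h hy23.symm,
      h11, h22, h13, h23, hn⟩
    · rintro rfl; exact hn.1 h22
    · rintro rfl; exact hn.1 h11
    · rintro rfl; exact hn.2 h23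
    · rintro rfl; exact hn.1 h13

theorem adj_of_outNbrs_ssubset (h : TwoBMGConditions G σ) {z x x' : V} (hzx : G z x)
    (hss : outNbrs G x' ⊂ outNbrs G x) : G z x' := by
  obtain ⟨y', hy'⟩ := h.sinkFree x'
  obtain ⟨y, hxy, hx'y⟩ := Set.exists_of_ssubset hss
  obtain ⟨a, ha⟩ := h.sinkFree y'
  have hza : G z a := h.adj_of_path z x y' a hzx (hss.subset hy') ha
  exact (h.adj_or_adj x' y' a z hy' ha hza).resolve_left fun hx'z =>
    hx'y (h.adj_of_path x' z x y hx'z hzx hxy)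

theorem inNbrs_subset_or_subset (h : TwoBMGConditions G σ) {x z : V}
    (hxz : outNbrs G x = outNbrs G z) : inNbrs G x ⊆ inNbrs G z ∨ inNbrs G z ⊆ inNbrs G x := by
  by_contra! hn
  obtain ⟨w1, hw1x, hw1z⟩ := Set.not_subset.1 hn.1
  obtain ⟨w2, hw2z, hw2x⟩ := Set.not_subset.1 hn.2
  obtain ⟨y, hxy⟩ := h.sinkFree x
  have hzy : G z y := (Set.ext_iff.1 hxz y).1 hxy
  have hxw2 : G x w2 := (h.adj_or_adj w2 z y x hw2z hzy hxy).resolve_left hw2x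
  exact hw1z (h.adj_of_path w1 x w2 z hw1x hxw2 hw2z)

theorem outNbrs_subset_or_subset (h : TwoBMGConditions G σ) {x z y : V} (hxy : G x y)
    (hzy : G z y) : outNbrs G x ⊆ outNbrs G z ∨ outNbrs G z ⊆ outNbrs G x := by
  by_contra! hn
  obtain ⟨y1, hxy1, hzy1⟩ := Set.not_subset.1 hn.1
  obtain ⟨y2, hzy2, hxy2⟩ := Set.not_subset.1 hn.2
  exact (h.adj_or_adj_of_common x z y1 y2 y hxy1 hzy2 hxy hzy).elim hxy2 hzy1

theorem nbrBelow_or_nbrBelow_of_subset (h : TwoBMGConditions G σ) {x z : V}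
    (hxz : outNbrs G x ⊆ outNbrs G z) : NbrBelow G x z ∨ NbrBelow G z x := by
  by_cases hzx : outNbrs G z ⊆ outNbrs G x
  · exact (h.inNbrs_subset_or_subset (hxz.antisymm hzx)).symm.imp (nbrBelow_of_subset hxz)
      (nbrBelow_of_subset hzx)
  · exact Or.inl (Or.inl (ssubset_of_subset_not_subset hxz hzx))

theorem mem_nbrCluster_or_mem_of_adj (h : TwoBMGConditions G σ) {x z y : V} (hxy : G x y)
    (hzy : G z y) : x ∈ nbrCluster G z ∨ z ∈ nbrCluster G x := by
  rcases h.outNbrs_subset_or_subset hxy hzy with hs | hs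
  · exact (h.nbrBelow_or_nbrBelow_of_subset hs).imp Or.inr Or.inr
  · exact (h.nbrBelow_or_nbrBelow_of_subset hs).symm.imp Or.inr Or.inr

theorem mem_nbrCluster_iff_adj (h : TwoBMGConditions G σ) {x y : V} (hxy : σ x ≠ σ y) :
    y ∈ nbrCluster G x ↔ G x y := by
  refine ⟨fun hy => hy.resolve_right fun hyx => ?_, Or.inl⟩
  obtain ⟨w, hyw⟩ := h.sinkFree y
  exact hxy (Bool.eq_of_ne_of_ne (h.proper x w (hyx.outNbrs_subset hyw)) (h.proper y w hyw))

theorem nbrCluster_subset (h : TwoBMGConditions G σ) {x z : V} (hx : x ∈ nbrCluster G z) :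
    nbrCluster G x ⊆ nbrCluster G z := by
  rintro u (hxu | hux)
  · rcases hx with hzx | hxz
    · have hout : outNbrs G u ⊆ outNbrs G z := fun w huw => h.adj_of_path z x u w hzx hxu huw
      exact Or.inr (nbrBelow_of_subset hout fun w hwz => h.adj_of_path w z x u hwz hzx hxu)
    · exact Or.inl (hxz.outNbrs_subset hxu)
  · rcases hx with hzx | hxz
    · rcases hux with hss | ⟨-, hin⟩
      · exact Or.inl (h.adj_of_outNbrs_ssubset hzx hss)
      · exact Or.inl (hin hzx)
    · exact Or.inr (hux.trans hxz)

theorem mem_nbrCluster_or_mem (h : TwoBMGConditions G σ) {x z w : V} (hwx : w ∈ nbrCluster G x)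
    (hwz : w ∈ nbrCluster G z) : x ∈ nbrCluster G z ∨ z ∈ nbrCluster G x := by
  obtain ⟨y, hwy⟩ := h.sinkFree w
  rcases hwx with hxw | hwx <;> rcases hwz with hzw | hwz
  · exact h.mem_nbrCluster_or_mem_of_adj hxw hzw
  · exact (h.adj_or_adj x w y z hxw hwy (hwz.outNbrs_subset hwy)).symm.imp Or.inl Or.inl
  · exact (h.adj_or_adj z w y x hzw hwy (hwx.outNbrs_subset hwy)).imp Or.inl Or.inl
  · exact h.mem_nbrCluster_or_mem_of_adj (hwx.outNbrs_subset hwy) (hwz.outNbrs_subset hwy)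

theorem nbrCluster_laminar (h : TwoBMGConditions G σ) :
    ∀ p ∈ Set.range (nbrCluster G), ∀ q ∈ Set.range (nbrCluster G),
      p ⊆ q ∨ q ⊆ p ∨ p ∩ q = ∅ := by
  rintro _ ⟨x, rfl⟩ _ ⟨z, rfl⟩
  rcases (nbrCluster G x ∩ nbrCluster G z).eq_empty_or_nonempty with hxz | ⟨w, hwx, hwz⟩
  · exact Or.inr (Or.inr hxz)
  · exact (h.mem_nbrCluster_or_mem hwx hwz).imp h.nbrCluster_subset
      fun hz => Or.inl (h.nbrCluster_subset hz)

theorem isBMG [Nonempty V] (h : TwoBMGConditions G σ) : IsBMG G σ := by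
  set T := PhyloTree.ofLaminar _ h.nbrCluster_laminar (by
    rintro _ ⟨x, rfl⟩; exact ⟨x, self_mem_nbrCluster x⟩)
  have cluster_mem (x : V) : nbrCluster G x ∈ T.clusters := Or.inr (Or.inr ⟨x, rfl⟩)
  refine ⟨T, fun x y => ⟨fun hxy => ⟨h.proper x y hxy, fun y' hy' => ?_⟩, ?_⟩⟩
  · have hxy' : x ≠ y' := by rintro rfl; exact h.proper x y hxy hy'
    refine (T.lcaSet_subset (cluster_mem x) (self_mem_nbrCluster x) (Or.inl hxy)).trans ?_
    exact PhyloTree.subset_lcaSet_ofLaminar hxy' (by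
      rintro _ ⟨z, rfl⟩ hx -
      exact h.nbrCluster_subset hx)
  · rintro ⟨hσ, hbest⟩
    obtain ⟨y0, hxy0⟩ := h.sinkFree x
    have hy0 : σ y0 = σ y := Bool.eq_of_ne_of_ne (h.proper x y0 hxy0).symm hσ.symm
    refine (h.mem_nbrCluster_iff_adj hσ).1 ?_
    exact T.lcaSet_subset (cluster_mem x) (self_mem_nbrCluster x) (Or.inl hxy0)
      (hbest y0 hy0 (T.mem_lcaSet_right x y))

end TwoBMGConditions

/-- A properly 2-colored digraph is a BMG iff it is sink-free
and contains no induced F1-, F2-, or F3-graph. -/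
theorem twoBMG_characterization [Fintype V] (G : V → V → Prop) (σ : V → Bool)
    (hproper : ∀ x y : V, G x y → σ x ≠ σ y)
    (hsurj : Function.Surjective σ) :
    IsBMG G σ ↔
      ((∀ x : V, ∃ y : V, G x y) ∧ ¬ HasF1 G σ ∧ ¬ HasF2 G σ ∧ ¬ HasF3 G σ) := by
  constructor
  · rintro ⟨T, hT⟩
    refine ⟨fun x => ?_, hT.not_hasF1, hT.not_hasF2, hT.not_hasF3⟩
    obtain ⟨y, hy⟩ := hsurj (!σ x)
    obtain ⟨z, -, hxz⟩ := hT.exists_adj (x := x) (y := y) (by simp [hy])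
    exact ⟨z, hxz⟩
  · rintro ⟨hsf, hF1, hF2, hF3⟩
    obtain ⟨v, -⟩ := hsurj true
    have : Nonempty V := ⟨v⟩
    exact (TwoBMGConditions.of_not_hasF hproper hsf hF1 hF2 hF3).isBMG
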